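/- arXiv:1804.02853 — 3 statements merged into one kernel-verified Lean document; each statement's English description precedes it below -/
import Mathlib

section
/- Let r ∈ (0,1) and T > 0. Suppose the bilinear operator B satisfies the pointwise kernel bound ‖B(u,v)(t)‖_∞ ≤ C ∫₀ᵗ (t-s)^{-1/2} ‖u(s)‖_∞ ‖v(s)‖_∞ ds. Then B is continuous from L^∞_{1,T} × L^∞_{r,T} into L^∞_{r,T} with norm at most C_{r} (independent of T), and from L^∞_{r,T} × L^∞_{r,T} into L^∞_{r,T} with norm at most C_r T^{(1-r)/2}. -/
/-!
The substitution `s = t x` gives `∫₀ᵗ s^{α-1} (t-s)^{β-1} ds = B(α, β) t^{α+β-1}`. If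
`s^p ‖u s‖ ≤ M₁` and `s^q ‖v s‖ ≤ M₂`, the kernel integral is therefore at most
`M₁ M₂ B(1-p-q, 1/2) t^{1/2-p-q}`. For `(p, q) = (1/2, r/2)` the weight `t^{r/2}` cancels this
power exactly; for `p = q = r/2` it leaves `t^{(1-r)/2} ≤ T^{(1-r)/2}`.
-/

open MeasureTheory Set ProbabilityTheory

lemma rpow_mul_one_sub_rpow_eq_re {α β x : ℝ} (hx₀ : 0 ≤ x) (hx₁ : x ≤ 1) :
    x ^ (α - 1) * (1 - x) ^ (β - 1) =
      ((x : ℂ) ^ ((α : ℂ) - 1) * (1 - (x : ℂ)) ^ ((β : ℂ) - 1)).re := by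
  rw [← Complex.ofReal_one, ← Complex.ofReal_sub, ← Complex.ofReal_sub, ← Complex.ofReal_sub,
    ← Complex.ofReal_cpow hx₀, ← Complex.ofReal_cpow (sub_nonneg.2 hx₁), ← Complex.ofReal_mul,
    Complex.ofReal_re]

lemma integrableOn_rpow_mul_one_sub_rpow {α β : ℝ} (hα : 0 < α) (hβ : 0 < β) :
    IntegrableOn (fun x : ℝ => x ^ (α - 1) * (1 - x) ^ (β - 1)) (Ioo 0 1) := by
  have h := (Complex.betaIntegral_convergent (u := α) (v := β) (by simpa) (by simpa))
  rw [intervalIntegrable_iff_integrableOn_Ioo_of_le zero_le_one] at h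
  refine IntegrableOn.congr_fun (f := fun x => RCLike.re _) h.re (fun x hx => ?_)
    measurableSet_Ioo
  exact (rpow_mul_one_sub_rpow_eq_re hx.1.le hx.2.le).symm

lemma integral_rpow_mul_one_sub_rpow {α β : ℝ} (hα : 0 < α) (hβ : 0 < β) :
    ∫ x in Ioo 0 1, x ^ (α - 1) * (1 - x) ^ (β - 1) = beta α β := by
  have h := (Complex.betaIntegral_convergent (u := α) (v := β) (by simpa) (by simpa))
  rw [intervalIntegrable_iff_integrableOn_Ioo_of_le zero_le_one] at h
  rw [beta_eq_betaIntegralReal α β hα hβ, Complex.betaIntegral,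
    intervalIntegral.integral_of_le zero_le_one, integral_Ioc_eq_integral_Ioo,
    ← RCLike.re_to_complex, ← integral_re h]
  exact setIntegral_congr_fun measurableSet_Ioo fun x hx =>
    rpow_mul_one_sub_rpow_eq_re hx.1.le hx.2.le

lemma rpow_mul_sub_rpow_eq_rpow_mul_div {α β t s : ℝ} (ht : 0 < t) (hs₀ : 0 ≤ s) (hst : s ≤ t) :
    s ^ (α - 1) * (t - s) ^ (β - 1) =
      t ^ (α + β - 2) * ((s / t) ^ (α - 1) * (1 - s / t) ^ (β - 1)) := by
  rw [one_sub_div ht.ne', Real.div_rpow hs₀ ht.le, Real.div_rpow (sub_nonneg.2 hst) ht.le,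
    show α + β - 2 = (α - 1) + (β - 1) by ring, Real.rpow_add ht]
  field_simp

lemma integrableOn_rpow_mul_sub_rpow {α β t : ℝ} (hα : 0 < α) (hβ : 0 < β) (ht : 0 < t) :
    IntegrableOn (fun s => s ^ (α - 1) * (t - s) ^ (β - 1)) (Ioo 0 t) := by
  have h := (intervalIntegrable_iff_integrableOn_Ioo_of_le zero_le_one).2
    (integrableOn_rpow_mul_one_sub_rpow hα hβ)
  replace h :
      IntervalIntegrable (fun s => (s / t) ^ (α - 1) * (1 - s / t) ^ (β - 1)) volume 0 t := by
    simpa [div_eq_mul_inv] using h.comp_mul_right (c := t⁻¹)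
  rw [intervalIntegrable_iff_integrableOn_Ioo_of_le ht.le] at h
  exact IntegrableOn.congr_fun (h.const_mul (t ^ (α + β - 2)))
    (fun s hs => (rpow_mul_sub_rpow_eq_rpow_mul_div ht hs.1.le hs.2.le).symm) measurableSet_Ioo

lemma integral_rpow_mul_sub_rpow {α β t : ℝ} (hα : 0 < α) (hβ : 0 < β) (ht : 0 < t) :
    ∫ s in Ioo 0 t, s ^ (α - 1) * (t - s) ^ (β - 1) = beta α β * t ^ (α + β - 1) := by
  rw [setIntegral_congr_fun measurableSet_Ioo
      fun s hs => rpow_mul_sub_rpow_eq_rpow_mul_div ht hs.1.le hs.2.le,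
    integral_const_mul, ← integral_Ioc_eq_integral_Ioo, ← intervalIntegral.integral_of_le ht.le,
    intervalIntegral.integral_comp_div (fun x => x ^ (α - 1) * (1 - x) ^ (β - 1)) ht.ne',
    zero_div, div_self ht.ne', intervalIntegral.integral_of_le zero_le_one,
    integral_Ioc_eq_integral_Ioo, integral_rpow_mul_one_sub_rpow hα hβ, smul_eq_mul,
    show α + β - 1 = (α + β - 2) + 1 by ring, Real.rpow_add ht, Real.rpow_one]
  ring

section KernelEstimate

variable {E F : Type*} [NormedAddCommGroup E] [NormedAddCommGroup F]

lemma norm_le_mul_rpow_neg {x : E} {s p M : ℝ} (hs : 0 < s) (h : s ^ p * ‖x‖ ≤ M) :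
    ‖x‖ ≤ M * s ^ (-p) := by
  rw [Real.rpow_neg hs.le, ← div_eq_mul_inv, le_div_iff₀ (Real.rpow_pos_of_pos hs p), mul_comm]
  exact h

lemma nonneg_of_forall_rpow_mul_norm_le {f : ℝ → E} {p M T : ℝ} (hT : 0 < T)
    (h : ∀ s ∈ Ioo 0 T, s ^ p * ‖f s‖ ≤ M) : 0 ≤ M :=
  (mul_nonneg (Real.rpow_nonneg (by linarith) p) (norm_nonneg _)).trans
    (h (T / 2) ⟨by linarith, by linarith⟩)

lemma integral_kernel_mul_norm_mul_norm_le {u v : ℝ → E} {p q t M₁ M₂ : ℝ} (hpq : p + q < 1)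
    (ht : 0 < t) (hu : ∀ s ∈ Ioo 0 t, s ^ p * ‖u s‖ ≤ M₁)
    (hv : ∀ s ∈ Ioo 0 t, s ^ q * ‖v s‖ ≤ M₂) :
    ∫ s in Ioo 0 t, (t - s) ^ (-(1 : ℝ) / 2) * ‖u s‖ * ‖v s‖ ≤
      M₁ * M₂ * (beta (1 - (p + q)) (1 / 2) * t ^ ((1 : ℝ) / 2 - (p + q))) := by
  have hM₁ := nonneg_of_forall_rpow_mul_norm_le ht hu
  have hα : 0 < 1 - (p + q) := by linarith
  have hβ : (0 : ℝ) < 1 / 2 := by norm_num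
  have hexp : (1 : ℝ) / 2 - (p + q) = 1 - (p + q) + 1 / 2 - 1 := by ring
  rw [hexp, ← integral_rpow_mul_sub_rpow hα hβ ht, ← integral_const_mul]
  refine integral_mono_of_nonneg ?_ ((integrableOn_rpow_mul_sub_rpow hα hβ ht).const_mul _) ?_
  all_goals filter_upwards [ae_restrict_mem measurableSet_Ioo] with s hs
  · have : 0 ≤ (t - s) ^ (-(1 : ℝ) / 2) := Real.rpow_nonneg (by linarith [hs.2]) _
    positivity
  have hu' := norm_le_mul_rpow_neg hs.1 (hu s hs)
  have hv' := norm_le_mul_rpow_neg hs.1 (hv s hs)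
  have hw : s ^ (1 - (p + q) - 1) = s ^ (-p) * s ^ (-q) := by
    rw [← Real.rpow_add hs.1]; ring_nf
  have hk : (t - s) ^ ((1 : ℝ) / 2 - 1) = (t - s) ^ (-(1 : ℝ) / 2) := by norm_num
  rw [hw, hk]
  have hk₀ : 0 ≤ (t - s) ^ (-(1 : ℝ) / 2) := Real.rpow_nonneg (by linarith [hs.2]) _
  calc (t - s) ^ (-(1 : ℝ) / 2) * ‖u s‖ * ‖v s‖
      ≤ (t - s) ^ (-(1 : ℝ) / 2) * (M₁ * s ^ (-p)) * (M₂ * s ^ (-q)) := by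
        gcongr
        exact mul_nonneg hk₀ (mul_nonneg hM₁ (Real.rpow_nonneg hs.1.le _))
    _ = M₁ * M₂ * (s ^ (-p) * s ^ (-q) * (t - s) ^ (-(1 : ℝ) / 2)) := by ring

lemma rpow_mul_norm_le_of_le_kernel_integral {u v : ℝ → E} {x : F} {C p q w t T M₁ M₂ : ℝ}
    (hC : 0 ≤ C) (hpq : p + q < 1) (ht : t ∈ Ioo 0 T)
    (hx : ‖x‖ ≤ C * ∫ s in Ioo 0 t, (t - s) ^ (-(1 : ℝ) / 2) * ‖u s‖ * ‖v s‖)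
    (hu : ∀ s ∈ Ioo 0 T, s ^ p * ‖u s‖ ≤ M₁) (hv : ∀ s ∈ Ioo 0 T, s ^ q * ‖v s‖ ≤ M₂) :
    t ^ w * ‖x‖ ≤ C * beta (1 - (p + q)) (1 / 2) * M₁ * M₂ * t ^ (w + 1 / 2 - (p + q)) := by
  have hI := integral_kernel_mul_norm_mul_norm_le hpq ht.1
    (fun s hs => hu s ⟨hs.1, hs.2.trans ht.2⟩) (fun s hs => hv s ⟨hs.1, hs.2.trans ht.2⟩)
  calc t ^ w * ‖x‖
      ≤ t ^ w * (C * (M₁ * M₂ * (beta (1 - (p + q)) (1 / 2) * t ^ ((1 : ℝ) / 2 - (p + q))))) :=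
        mul_le_mul_of_nonneg_left (hx.trans (by gcongr)) (Real.rpow_nonneg ht.1.le w)
    _ = C * beta (1 - (p + q)) (1 / 2) * M₁ * M₂ * t ^ (w + 1 / 2 - (p + q)) := by
        rw [add_sub_assoc, Real.rpow_add ht.1]; ring

end KernelEstimate

theorem stmt_5_general {E : Type*} [NormedAddCommGroup E]
    (r : ℝ) (hr1 : r < 1) (C : ℝ) (hC : 0 < C) :
    ∃ Cr : ℝ, 0 < Cr ∧ ∀ T : ℝ, 0 < T →
      ∀ B : (ℝ → E) → (ℝ → E) → (ℝ → E),
      (∀ u v : ℝ → E, ∀ t ∈ Set.Ioo 0 T,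
          ‖B u v t‖ ≤ C * ∫ s in Set.Ioo 0 t, (t - s) ^ (-(1 : ℝ) / 2) * ‖u s‖ * ‖v s‖) →
      ((∀ (u v : ℝ → E) (M₁ M₂ : ℝ),
          (∀ s ∈ Set.Ioo 0 T, s ^ ((1 : ℝ) / 2) * ‖u s‖ ≤ M₁) →
          (∀ s ∈ Set.Ioo 0 T, s ^ (r / 2) * ‖v s‖ ≤ M₂) →
          ∀ t ∈ Set.Ioo 0 T, t ^ (r / 2) * ‖B u v t‖ ≤ Cr * M₁ * M₂) ∧
       (∀ (u v : ℝ → E) (M₁ M₂ : ℝ),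
          (∀ s ∈ Set.Ioo 0 T, s ^ (r / 2) * ‖u s‖ ≤ M₁) →
          (∀ s ∈ Set.Ioo 0 T, s ^ (r / 2) * ‖v s‖ ≤ M₂) →
          ∀ t ∈ Set.Ioo 0 T, t ^ (r / 2) * ‖B u v t‖ ≤ Cr * T ^ ((1 - r) / 2) * M₁ * M₂)) := by
  set K₁ := beta (1 - (1 / 2 + r / 2)) (1 / 2)
  set K₂ := beta (1 - (r / 2 + r / 2)) (1 / 2)
  have hK₁ : 0 < K₁ := beta_pos (by linarith) one_half_pos
  have hK₂ : 0 < K₂ := beta_pos (by linarith) one_half_pos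
  refine ⟨C * (K₁ + K₂), by positivity, fun T hT B hB => ⟨?_, ?_⟩⟩
  · intro u v M₁ M₂ hu hv t ht
    have hM₁ := nonneg_of_forall_rpow_mul_norm_le hT hu
    have hM₂ := nonneg_of_forall_rpow_mul_norm_le hT hv
    calc t ^ (r / 2) * ‖B u v t‖
        ≤ C * K₁ * M₁ * M₂ * t ^ (r / 2 + 1 / 2 - (1 / 2 + r / 2)) :=
          rpow_mul_norm_le_of_le_kernel_integral hC.le (by linarith) ht (hB u v t ht) hu hv
      _ = C * K₁ * M₁ * M₂ := by
          rw [show r / 2 + 1 / 2 - (1 / 2 + r / 2) = 0 by ring, Real.rpow_zero, mul_one]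
      _ ≤ C * (K₁ + K₂) * M₁ * M₂ := by gcongr; linarith
  · intro u v M₁ M₂ hu hv t ht
    have hM₁ := nonneg_of_forall_rpow_mul_norm_le hT hu
    have hM₂ := nonneg_of_forall_rpow_mul_norm_le hT hv
    calc t ^ (r / 2) * ‖B u v t‖
        ≤ C * K₂ * M₁ * M₂ * t ^ (r / 2 + 1 / 2 - (r / 2 + r / 2)) :=
          rpow_mul_norm_le_of_le_kernel_integral hC.le (by linarith) ht (hB u v t ht) hu hv
      _ ≤ C * K₂ * M₁ * M₂ * T ^ ((1 - r) / 2) := by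
          rw [show r / 2 + 1 / 2 - (r / 2 + r / 2) = (1 - r) / 2 by ring]
          gcongr <;> linarith [ht.1, ht.2]
      _ ≤ C * (K₁ + K₂) * T ^ ((1 - r) / 2) * M₁ * M₂ := by
          rw [mul_right_comm _ _ (T ^ _), mul_right_comm _ _ (T ^ _)]
          gcongr
          linarith

/-- Bilinear heat-type estimate in the weighted spaces `L^∞_{μ,T}` whose norm is
`sup_{0<s<T} s^{μ/2} ‖f(s)‖_∞`. Here `E` plays the role of `L^∞(ℝ^d, ℝ^d)` and the kernel
bound `‖B(u,v)(t)‖ ≤ C ∫₀ᵗ (t-s)^{-1/2} ‖u s‖ ‖v s‖ ds` is assumed. Then `B` maps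
`L^∞_{1,T} × L^∞_{r,T}` to `L^∞_{r,T}` with norm `≤ C_r` independent of `T`, and
`L^∞_{r,T} × L^∞_{r,T}` to `L^∞_{r,T}` with norm `≤ C_r T^{(1-r)/2}`. -/
theorem stmt_5 {E : Type*} [NormedAddCommGroup E]
    (r : ℝ) (hr : 0 < r) (hr1 : r < 1) (C : ℝ) (hC : 0 < C) :
    ∃ Cr : ℝ, 0 < Cr ∧ ∀ T : ℝ, 0 < T →
      ∀ B : (ℝ → E) → (ℝ → E) → (ℝ → E),
      (∀ u v : ℝ → E, ∀ t ∈ Set.Ioo 0 T,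
          ‖B u v t‖ ≤ C * ∫ s in Set.Ioo 0 t, (t - s) ^ (-(1 : ℝ) / 2) * ‖u s‖ * ‖v s‖) →
      ((∀ (u v : ℝ → E) (M₁ M₂ : ℝ),
          (∀ s ∈ Set.Ioo 0 T, s ^ ((1 : ℝ) / 2) * ‖u s‖ ≤ M₁) →
          (∀ s ∈ Set.Ioo 0 T, s ^ (r / 2) * ‖v s‖ ≤ M₂) →
          ∀ t ∈ Set.Ioo 0 T, t ^ (r / 2) * ‖B u v t‖ ≤ Cr * M₁ * M₂) ∧
       (∀ (u v : ℝ → E) (M₁ M₂ : ℝ),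
          (∀ s ∈ Set.Ioo 0 T, s ^ (r / 2) * ‖u s‖ ≤ M₁) →
          (∀ s ∈ Set.Ioo 0 T, s ^ (r / 2) * ‖v s‖ ≤ M₂) →
          ∀ t ∈ Set.Ioo 0 T, t ^ (r / 2) * ‖B u v t‖ ≤ Cr * T ^ ((1 - r) / 2) * M₁ * M₂)) :=
  stmt_5_general r hr1 C hC
end

section
/- Let T* < ∞, r ∈ (0,1), and suppose u : [0,T*) → B^{-r,∞}_∞ satisfies: for every t₀ ∈ (0,T*) and every t ∈ [0, T*-t₀), the bound f_{t₀}(t) ≤ C(‖u(t₀)‖_{B^{-r,∞}_∞} + (T*-t₀)^{(1-r)/2} f_{t₀}(t)²), where f_{t₀}(t) = sup_{0<s≤t} s^{r/2} ‖u(t₀+s)‖_{L^∞}, and f_{t₀}(t) → +∞ as t → (T*-t₀)⁻. Then for every t₀ close enough to T*, (T*-t₀)^{(1-r)/2} ‖u(t₀)‖_{B^{-r,∞}_∞} ≥ 1/(4C²). In particular liminf_{t→T*} (T*-t)^{(1-r)/2} ‖u(t)‖_{B^{-r,∞}_∞} ≥ 1/(4C²) and ∫_{T*/2}^{T*} ‖u(t)‖_{B^{-r,∞}_∞}^{2/(1-r)}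 dt = +∞. -/
open Filter MeasureTheory Set
open scoped ENNReal Topology

/-!
If `4 C² A B < 1`, the level `m = 1/(2CB)` satisfies `C (A + B m²) < m`, so a continuous `f`
with `f 0 = 0` and `f ≤ C (A + B f²)` can never reach `m`: it stays below `m` and cannot blow up.
With `A = ‖u(t₀)‖` and `B = (T* - t₀)^{(1-r)/2}` this gives `A B ≥ 1/(4C²)`, i.e.
`‖u(t)‖^{2/(1-r)} ≳ (T* - t)⁻¹`, which is not integrable up to `T*`.
-/

lemma IsPreconnected.forall_lt_of_forall_ne {α : Type*} [TopologicalSpace α] {S : Set α}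
    (hS : IsPreconnected S) {f : α → ℝ} (hf : ContinuousOn f S) {a : α} (ha : a ∈ S) {m : ℝ}
    (hfa : f a < m) (hne : ∀ x ∈ S, f x ≠ m) : ∀ x ∈ S, f x < m := by
  intro x hx
  by_contra! hxm
  obtain ⟨y, hy, hym⟩ := hS.intermediate_value ha hx hf ⟨hfa.le, hxm⟩
  exact hne y hy hym

lemma quadratic_bound_lt_of_mul_lt {A B C : ℝ} (hB : 0 < B) (hC : 0 < C)
    (h : 4 * C ^ 2 * (B * A) < 1) : C * (A + B * (1 / (2 * C * B)) ^ 2) < 1 / (2 * C * B) := by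
  have gap : 1 / (2 * C * B) - C * (A + B * (1 / (2 * C * B)) ^ 2)
      = (1 - 4 * C ^ 2 * (B * A)) / (4 * C * B) := by
    field_simp
    ring
  rw [← sub_pos, gap]
  exact div_pos (by linarith) (by positivity)

theorem one_div_four_mul_sq_le_of_tendsto_atTop {A B C δ : ℝ} (hB : 0 < B) (hC : 0 < C)
    (hδ : 0 < δ) {f : ℝ → ℝ} (hf : ContinuousOn f (Ico 0 δ)) (hf0 : f 0 = 0)
    (hbound : ∀ t ∈ Ico 0 δ, f t ≤ C * (A + B * f t ^ 2))
    (hblow : Tendsto f (𝓝[<] δ) atTop) : 1 / (4 * C ^ 2) ≤ B * A := by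
  by_contra! hlt
  set m := 1 / (2 * C * B)
  have hm : C * (A + B * m ^ 2) < m :=
    quadratic_bound_lt_of_mul_lt hB hC ((lt_div_iff₀' (by positivity)).1 hlt)
  have hlt_m : ∀ t ∈ Ico 0 δ, f t < m :=
    isPreconnected_Ico.forall_lt_of_forall_ne hf (left_mem_Ico.2 hδ)
      (by rw [hf0]; positivity) fun t ht hft => by linarith [hbound t ht, hft ▸ hm]
  obtain ⟨t, hmt, ht⟩ := ((hblow.eventually_ge_atTop m).and (Ico_mem_nhdsLT hδ)).exists
  exact (hlt_m t ht).not_ge hmt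

lemma lintegral_Ioo_ofReal_inv_sub_eq_top {a b : ℝ} (hab : a < b) :
    ∫⁻ t in Ioo a b, ENNReal.ofReal (b - t)⁻¹ = ∞ := by
  by_contra h
  have hint : IntegrableOn (fun t => (b - t)⁻¹) (Ioo a b) :=
    (lintegral_ofReal_ne_top_iff_integrable (by fun_prop)
      ((ae_restrict_iff' measurableSet_Ioo).2 (ae_of_all _ fun t ht => by
        simpa using ht.2.le))).1 h
  have hpole : IntervalIntegrable (fun t => (t - b)⁻¹) volume a b :=
    (intervalIntegrable_iff_integrableOn_Ioo_of_le hab.le).2 (by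
      simpa only [← neg_sub b, inv_neg] using hint.fun_neg)
  rw [intervalIntegrable_sub_inv_iff] at hpole
  simp [hab.ne, hab.le] at hpole

lemma lintegral_Ioc_eq_top_of_mul_inv_sub_le {a b k : ℝ} (hab : a < b) (hk : 0 < k)
    {g : ℝ → ℝ} (hg : ∀ t ∈ Ioo a b, k * (b - t)⁻¹ ≤ g t) :
    ∫⁻ t in Ioc a b, ENNReal.ofReal (g t) = ∞ := by
  refine top_le_iff.1 ?_
  calc ∞ = ∫⁻ t in Ioo a b, ENNReal.ofReal (k * (b - t)⁻¹) := by
        simp_rw [ENNReal.ofReal_mul hk.le]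
        rw [lintegral_const_mul' _ _ ENNReal.ofReal_ne_top,
          lintegral_Ioo_ofReal_inv_sub_eq_top hab, ENNReal.mul_top (by simpa using hk)]
    _ ≤ ∫⁻ t in Ioo a b, ENNReal.ofReal (g t) :=
        setLIntegral_mono' measurableSet_Ioo fun t ht => ENNReal.ofReal_le_ofReal (hg t ht)
    _ ≤ ∫⁻ t in Ioc a b, ENNReal.ofReal (g t) := lintegral_mono_set Ioo_subset_Ioc_self

lemma rpow_inv_mul_inv_le_rpow_inv {c s x p : ℝ} (hc : 0 ≤ c) (hs : 0 < s) (hx : 0 ≤ x)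
    (hp : 0 < p) (h : c ≤ s ^ p * x) : c ^ p⁻¹ * s⁻¹ ≤ x ^ p⁻¹ := by
  have := Real.rpow_le_rpow hc h (inv_nonneg.2 hp.le)
  rwa [Real.mul_rpow (by positivity) hx, Real.rpow_rpow_inv hs.le hp.ne', mul_comm,
    ← div_le_iff₀ hs, div_eq_mul_inv] at this

theorem stmt_17_general (Tstar r C : ℝ) (hT : 0 < Tstar) (hr1 : r < 1) (hC : 0 < C)
    (Nb : ℝ → ℝ) (hNb_nonneg : ∀ t ∈ Set.Ioo 0 Tstar, 0 ≤ Nb t)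
    (F : ℝ → ℝ → ℝ)
    (hF_cont : ∀ t₀ ∈ Set.Ioo 0 Tstar, ContinuousOn (F t₀) (Set.Ico 0 (Tstar - t₀)))
    (hF_zero : ∀ t₀ ∈ Set.Ioo 0 Tstar, F t₀ 0 = 0)
    (hF_bound : ∀ t₀ ∈ Set.Ioo 0 Tstar, ∀ t ∈ Set.Ico 0 (Tstar - t₀),
      F t₀ t ≤ C * (Nb t₀ + (Tstar - t₀) ^ ((1 - r) / 2) * (F t₀ t) ^ 2))
    (hF_blow : ∀ t₀ ∈ Set.Ioo 0 Tstar,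
      Tendsto (F t₀) (nhdsWithin (Tstar - t₀) (Set.Iio (Tstar - t₀))) atTop) :
    (∀ t₀ ∈ Set.Ioo 0 Tstar, 1 / (4 * C ^ 2) ≤ (Tstar - t₀) ^ ((1 - r) / 2) * Nb t₀) ∧
    ENNReal.ofReal (1 / (4 * C ^ 2)) ≤
      Filter.liminf (fun t => ENNReal.ofReal ((Tstar - t) ^ ((1 - r) / 2) * Nb t))
        (nhdsWithin Tstar (Set.Iio Tstar)) ∧
    ∫⁻ t in Set.Ioc (Tstar / 2) Tstar, ENNReal.ofReal (Nb t ^ (2 / (1 - r))) = ⊤ := by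
  have hp : 0 < (1 - r) / 2 := by linarith
  have rate : ∀ t₀ ∈ Ioo 0 Tstar, 1 / (4 * C ^ 2) ≤ (Tstar - t₀) ^ ((1 - r) / 2) * Nb t₀ :=
    fun t₀ ht₀ => one_div_four_mul_sq_le_of_tendsto_atTop
      (Real.rpow_pos_of_pos (sub_pos.2 ht₀.2) _) hC (sub_pos.2 ht₀.2) (hF_cont t₀ ht₀)
      (hF_zero t₀ ht₀) (hF_bound t₀ ht₀) (hF_blow t₀ ht₀)
  refine ⟨rate, le_liminf_of_le (by isBoundedDefault) ?_, ?_⟩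
  · filter_upwards [Ioo_mem_nhdsLT hT] with t ht
    exact ENNReal.ofReal_le_ofReal (rate t ht)
  · refine lintegral_Ioc_eq_top_of_mul_inv_sub_le (half_lt_self hT)
      (k := (1 / (4 * C ^ 2)) ^ (2 / (1 - r))) (by positivity) fun t ht => ?_
    have ht₀ : t ∈ Ioo 0 Tstar := ⟨by linarith [ht.1], ht.2⟩
    simpa only [inv_div] using rpow_inv_mul_inv_le_rpow_inv (by positivity)
      (sub_pos.2 ht.2) (hNb_nonneg t ht₀) hp (rate t ht₀)

/-- Blow-up rate lower bound. Here `Nb t` stands for `‖u(t)‖_{B^{-r,∞}_∞}` and `F t₀ t`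
stands for `f_{t₀}(t) = sup_{0<s≤t} s^{r/2} ‖u(t₀+s)‖_∞`. If for every `t₀ ∈ (0,T*)` the
function `F t₀` is continuous on `[0, T*-t₀)`, vanishes at `0`, satisfies the bound
`F t₀ t ≤ C (Nb t₀ + (T*-t₀)^{(1-r)/2} (F t₀ t)²)` and blows up as `t → (T*-t₀)⁻`, then
`(T*-t₀)^{(1-r)/2} Nb t₀ ≥ 1/(4C²)` for every `t₀ ∈ (0,T*)`; in particular the liminf bound
holds and `∫_{T*/2}^{T*} Nb(t)^{2/(1-r)} dt = +∞`. -/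
theorem stmt_17 (Tstar r C : ℝ) (hT : 0 < Tstar) (hr : 0 < r) (hr1 : r < 1) (hC : 0 < C)
    (Nb : ℝ → ℝ) (hNb_nonneg : ∀ t ∈ Set.Ioo 0 Tstar, 0 ≤ Nb t)
    (F : ℝ → ℝ → ℝ)
    (hF_nonneg : ∀ t₀ ∈ Set.Ioo 0 Tstar, ∀ t ∈ Set.Ico 0 (Tstar - t₀), 0 ≤ F t₀ t)
    (hF_cont : ∀ t₀ ∈ Set.Ioo 0 Tstar, ContinuousOn (F t₀) (Set.Ico 0 (Tstar - t₀)))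
    (hF_zero : ∀ t₀ ∈ Set.Ioo 0 Tstar, F t₀ 0 = 0)
    (hF_bound : ∀ t₀ ∈ Set.Ioo 0 Tstar, ∀ t ∈ Set.Ico 0 (Tstar - t₀),
      F t₀ t ≤ C * (Nb t₀ + (Tstar - t₀) ^ ((1 - r) / 2) * (F t₀ t) ^ 2))
    (hF_blow : ∀ t₀ ∈ Set.Ioo 0 Tstar,
      Tendsto (F t₀) (nhdsWithin (Tstar - t₀) (Set.Iio (Tstar - t₀))) atTop) :
    (∀ t₀ ∈ Set.Ioo 0 Tstar, 1 / (4 * C ^ 2) ≤ (Tstar - t₀) ^ ((1 - r) / 2) * Nb t₀) ∧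
    ENNReal.ofReal (1 / (4 * C ^ 2)) ≤
      Filter.liminf (fun t => ENNReal.ofReal ((Tstar - t) ^ ((1 - r) / 2) * Nb t))
        (nhdsWithin Tstar (Set.Iio Tstar)) ∧
    ∫⁻ t in Set.Ioc (Tstar / 2) Tstar, ENNReal.ofReal (Nb t ^ (2 / (1 - r))) = ⊤ :=
  stmt_17_general Tstar r C hT hr1 hC Nb hNb_nonneg F hF_cont hF_zero hF_bound hF_blow
end

section
/- Let T > 0, p₁, p₂, q ∈ [1,∞] with p₁ ≤ p₂, s ∈ ℝ, and set s' = s + 1 - 2(1/p₁ - 1/p₂). Suppose the operator family satisfies the dyadic block estimate ‖e^{tΔ}Δ_j g‖_{L^q} ≤ C e^{-c t 4^j} ‖Δ_j g‖_{L^q} for j ≥ 0. Then the Oseen integral operator L_{Oss}(f)(t) = -∫₀ᵗ e^{(t-s)Δ} ℙ∇ f(s) ds maps the Chemin–Lerner space 𝐋̃^{p₁}_T B^{s,∞}_q boundedly into 𝐋̃^{p₂}_T B^{s',∞}_q, with operator norm at most C'(1+T) for a constant C' independent of T. -/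
/-!
On a dyadic block `j ≥ 1` (with `x = j - 1`) the hypothesis bounds `‖Δ_j L f(t)‖_{L^q}` by
`C 2^x` times the causal time convolution of `‖Δ_j f‖_{L^q}` with `e^{-c 4^x τ}`. Young's
inequality in time, with `1/p₁ + 1/r = 1 + 1/p₂`, bounds the `L^{p₂}(0,T)` norm of that
convolution by `‖e^{-c 4^x τ}‖_{L^r(0,T)} ‖Δ_j f‖_{L^{p₁}(0,T)}`, and the kernel norm is at most
`(ρ / (c 4^x))^ρ` with `ρ = 1/r = 1 - 1/p₁ + 1/p₂`. The gain `4^{-xρ}` against the loss `2^x` of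
the gradient is exactly the shift `s' - s = 2ρ - 1` of regularity. The low-frequency block has
no decay and costs `‖1‖_{L^r(0,T)} = T^ρ ≤ 1 + T`.

Young's inequality is Hölder's inequality with the three exponents `1/p₂, 1 - 1/p₁, 1 - 1/r`
pointwise in `t`, followed by Tonelli; for `p₂ = ∞` the usual two-factor Hölder suffices.
-/

open MeasureTheory
open scoped ENNReal

/-- The time-Lebesgue norm `‖N‖_{L^p([0,T])}` of an `ℝ≥0∞`-valued function `N`. -/
noncomputable def timeLp (p : ℝ≥0∞) (T : ℝ) (N : ℝ → ℝ≥0∞) : ℝ≥0∞ :=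
  if p = ⊤ then essSup N (volume.restrict (Set.Ioc 0 T))
  else (∫⁻ t in Set.Ioc 0 T, N t ^ p.toReal) ^ (1 / p.toReal)

open Set

lemma timeLp_top (T : ℝ) (N : ℝ → ℝ≥0∞) :
    timeLp ⊤ T N = essSup N (volume.restrict (Ioc 0 T)) := if_pos rfl

lemma timeLp_of_ne_top {p : ℝ≥0∞} (hp : p ≠ ⊤) (T : ℝ) (N : ℝ → ℝ≥0∞) :
    timeLp p T N = (∫⁻ t in Ioc 0 T, N t ^ p.toReal) ^ (1 / p.toReal) := if_neg hp

lemma timeLp_one (T : ℝ) (N : ℝ → ℝ≥0∞) : timeLp 1 T N = ∫⁻ t in Ioc 0 T, N t := by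
  simp [timeLp_of_ne_top ENNReal.one_ne_top]

lemma timeLp_mono {p : ℝ≥0∞} {T : ℝ} {F G : ℝ → ℝ≥0∞} (h : ∀ t ∈ Ioc 0 T, F t ≤ G t) :
    timeLp p T F ≤ timeLp p T G := by
  rcases eq_or_ne p ⊤ with rfl | hp
  · simp only [timeLp_top]
    exact essSup_mono_ae (ae_restrict_of_forall_mem measurableSet_Ioc h)
  · simp only [timeLp_of_ne_top hp]
    gcongr ?_ ^ _
    exact setLIntegral_mono' measurableSet_Ioc fun t ht => by gcongr; exact h t ht

lemma timeLp_mono_horizon (p : ℝ≥0∞) (N : ℝ → ℝ≥0∞) {t T : ℝ} (h : t ≤ T) :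
    timeLp p t N ≤ timeLp p T N := by
  have hsub : Ioc 0 t ⊆ Ioc 0 T := Ioc_subset_Ioc_right h
  rcases eq_or_ne p ⊤ with rfl | hp
  · simp only [timeLp_top]
    exact essSup_mono_measure' (Measure.restrict_mono hsub le_rfl)
  · simp only [timeLp_of_ne_top hp]
    gcongr

lemma timeLp_const_mul {p : ℝ≥0∞} (hp : p ≠ 0) {a : ℝ≥0∞} (ha : a ≠ ⊤) (T : ℝ)
    (N : ℝ → ℝ≥0∞) : timeLp p T (fun t => a * N t) = a * timeLp p T N := by
  rcases eq_or_ne p ⊤ with rfl | hp'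
  · simp only [timeLp_top, ENNReal.essSup_const_mul]
  · have hP : 0 < p.toReal := ENNReal.toReal_pos hp hp'
    simp only [timeLp_of_ne_top hp', ENNReal.mul_rpow_of_nonneg _ _ hP.le]
    rw [lintegral_const_mul' _ _ (ENNReal.rpow_ne_top_of_nonneg hP.le ha),
      ENNReal.mul_rpow_of_nonneg _ _ (by positivity), ← ENNReal.rpow_mul, mul_one_div_cancel hP.ne',
      ENNReal.rpow_one]

lemma timeLp_top_le {T : ℝ} {F : ℝ → ℝ≥0∞} {M : ℝ≥0∞} (h : ∀ t ∈ Ioc 0 T, F t ≤ M) :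
    timeLp ⊤ T F ≤ M :=
  (timeLp_top T F).trans_le (essSup_le_of_ae_le M (ae_restrict_of_forall_mem measurableSet_Ioc h))

lemma measurePreserving_sub_left_restrict_Ioc (t : ℝ) :
    MeasurePreserving (fun σ => t - σ) (volume.restrict (Ioc 0 t))
      (volume.restrict (Ioc 0 t)) := by
  have h := (Measure.measurePreserving_sub_left volume t).restrict_preimage_emb
    (MeasurableEquiv.subLeft t).measurableEmbedding (Ioc 0 t)
  have hpre : (fun σ => t - σ) ⁻¹' Ioc 0 t = Ico 0 t := by
    ext σ
    simp only [mem_preimage, mem_Ioc, mem_Ico]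
    constructor <;> rintro ⟨h₁, h₂⟩ <;> constructor <;> linarith
  rwa [hpre, Measure.restrict_congr_set Ico_ae_eq_Ioc] at h

lemma setLIntegral_Ioc_comp_sub_left (t : ℝ) (g : ℝ → ℝ≥0∞) :
    ∫⁻ σ in Ioc 0 t, g (t - σ) = ∫⁻ u in Ioc 0 t, g u :=
  (measurePreserving_sub_left_restrict_Ioc t).lintegral_comp_emb
    (MeasurableEquiv.subLeft t).measurableEmbedding g

lemma timeLp_comp_sub_left (p : ℝ≥0∞) (t : ℝ) (K : ℝ → ℝ≥0∞) :
    timeLp p t (fun σ => K (t - σ)) = timeLp p t K := by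
  rcases eq_or_ne p ⊤ with rfl | hp
  · simp only [timeLp_top]
    conv_rhs => rw [← (measurePreserving_sub_left_restrict_Ioc t).map_eq]
    exact ((MeasurableEquiv.subLeft t).measurableEmbedding.essSup_map_measure (g := K)).symm
  · simp only [timeLp_of_ne_top hp, setLIntegral_Ioc_comp_sub_left t fun u => K u ^ p.toReal]

lemma lintegral_mul_le_timeLp_top_mul_timeLp_one {T : ℝ} (f : ℝ → ℝ≥0∞) {g : ℝ → ℝ≥0∞}
    (hg : AEMeasurable g (volume.restrict (Ioc 0 T))) :
    ∫⁻ t in Ioc 0 T, f t * g t ≤ timeLp ⊤ T f * timeLp 1 T g := by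
  rw [timeLp_top, timeLp_one, ← lintegral_const_mul'' _ hg]
  exact lintegral_mono_ae ((ENNReal.ae_le_essSup f).mono fun t ht => mul_le_mul_left ht _)

lemma lintegral_mul_le_timeLp_mul_timeLp {p q : ℝ≥0∞} [p.HolderConjugate q] {T : ℝ}
    {f g : ℝ → ℝ≥0∞} (hf : AEMeasurable f (volume.restrict (Ioc 0 T)))
    (hg : AEMeasurable g (volume.restrict (Ioc 0 T))) :
    ∫⁻ t in Ioc 0 T, f t * g t ≤ timeLp p T f * timeLp q T g := by
  rcases eq_or_ne p ⊤ with rfl | hp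
  · obtain rfl : q = 1 := (ENNReal.HolderConjugate.eq_top_iff_eq_one ⊤ q).1 rfl
    exact lintegral_mul_le_timeLp_top_mul_timeLp_one f hg
  rcases eq_or_ne q ⊤ with rfl | hq
  · obtain rfl : p = 1 := (ENNReal.HolderConjugate.eq_top_iff_eq_one ⊤ p).1 rfl
    simpa only [mul_comm] using lintegral_mul_le_timeLp_top_mul_timeLp_one g hf
  rw [timeLp_of_ne_top hp, timeLp_of_ne_top hq]
  exact ENNReal.lintegral_mul_le_Lp_mul_Lq _ (ENNReal.HolderConjugate.toReal_of_ne_top hp hq) hf hg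

lemma lintegral_mul_le_young_holder {α : Type*} [MeasurableSpace α] (μ : Measure α)
    {f g : α → ℝ≥0∞} (hf : AEMeasurable f μ) (hg : AEMeasurable g μ) {P Q R : ℝ}
    (hP : 1 ≤ P) (hQ : 0 < Q) (hR : 1 ≤ R) (hPQR : P⁻¹ + R⁻¹ = 1 + Q⁻¹) :
    ∫⁻ a, f a * g a ∂μ ≤ (∫⁻ a, f a ^ R * g a ^ P ∂μ) ^ Q⁻¹ *
      (∫⁻ a, f a ^ R ∂μ) ^ (R⁻¹ - Q⁻¹) * (∫⁻ a, g a ^ P ∂μ) ^ (P⁻¹ - Q⁻¹) := by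
  have hθ₁ : 0 ≤ Q⁻¹ := inv_nonneg.2 hQ.le
  have hθ₂ : 0 ≤ R⁻¹ - Q⁻¹ := by linarith [inv_le_one_of_one_le₀ hP]
  have hθ₃ : 0 ≤ P⁻¹ - Q⁻¹ := by linarith [inv_le_one_of_one_le₀ hR]
  have hsplit : ∀ a, f a * g a =
      (f a ^ R * g a ^ P) ^ Q⁻¹ * (f a ^ R) ^ (R⁻¹ - Q⁻¹) * (g a ^ P) ^ (P⁻¹ - Q⁻¹) := by
    intro a
    have hf1 : R * Q⁻¹ + R * (R⁻¹ - Q⁻¹) = 1 := by field_simp; ring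
    have hg1 : P * Q⁻¹ + P * (P⁻¹ - Q⁻¹) = 1 := by field_simp; ring
    rw [ENNReal.mul_rpow_of_nonneg _ _ hθ₁, ← ENNReal.rpow_mul, ← ENNReal.rpow_mul,
      ← ENNReal.rpow_mul, ← ENNReal.rpow_mul]
    calc f a * g a = f a ^ (R * Q⁻¹ + R * (R⁻¹ - Q⁻¹)) * g a ^ (P * Q⁻¹ + P * (P⁻¹ - Q⁻¹)) := by
          rw [hf1, hg1, ENNReal.rpow_one, ENNReal.rpow_one]
      _ = _ := by
          rw [ENNReal.rpow_add_of_nonneg _ _ (by positivity) (mul_nonneg (by linarith) hθ₂),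
            ENNReal.rpow_add_of_nonneg _ _ (by positivity) (mul_nonneg (by linarith) hθ₃)]
          ring
  have key := ENNReal.lintegral_prod_norm_pow_le (μ := μ) Finset.univ
    (f := ![fun a => f a ^ R * g a ^ P, fun a => f a ^ R, fun a => g a ^ P])
    (p := ![Q⁻¹, R⁻¹ - Q⁻¹, P⁻¹ - Q⁻¹]) ?_ ?_ ?_
  · simpa only [Fin.prod_univ_three, Matrix.cons_val_zero, Matrix.cons_val_one,
      Matrix.cons_val_two, Matrix.tail_cons, Matrix.head_cons, ← hsplit] using key
  · intro i _
    fin_cases i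
    · exact (hf.pow_const R).mul (hg.pow_const P)
    · exact hf.pow_const R
    · exact hg.pow_const P
  · simp only [Fin.sum_univ_three, Matrix.cons_val_zero, Matrix.cons_val_one,
      Matrix.cons_val_two, Matrix.tail_cons, Matrix.head_cons]
    linarith
  · intro i _
    fin_cases i <;> assumption

lemma exists_one_le_inv_add_inv_eq {p₁ p₂ : ℝ≥0∞} (hp₁ : 1 ≤ p₁) (hp₁₂ : p₁ ≤ p₂) :
    ∃ r : ℝ≥0∞, 1 ≤ r ∧ p₁⁻¹ + r⁻¹ = 1 + p₂⁻¹ :=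
  ⟨(1 + p₂⁻¹ - p₁⁻¹)⁻¹,
    ENNReal.one_le_inv.2 (tsub_le_iff_right.2 (add_le_add_right (ENNReal.inv_le_inv.2 hp₁₂) 1)),
    by rw [inv_inv, add_tsub_cancel_of_le ((ENNReal.inv_le_one.2 hp₁).trans le_self_add)]⟩

lemma ne_zero_of_inv_add_inv_eq {p₁ p₂ r : ℝ≥0∞} (hp₁ : 1 ≤ p₁) (hr : 1 ≤ r)
    (hpr : p₁⁻¹ + r⁻¹ = 1 + p₂⁻¹) : p₂ ≠ 0 := by
  rintro rfl
  rw [ENNReal.inv_zero, add_top] at hpr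
  exact ENNReal.add_ne_top.2 ⟨ENNReal.inv_ne_top.2 (zero_lt_one.trans_le hp₁).ne',
    ENNReal.inv_ne_top.2 (zero_lt_one.trans_le hr).ne'⟩ hpr

lemma ne_top_of_inv_add_inv_eq {p₁ p₂ r : ℝ≥0∞} (hr : 1 ≤ r) (hp₂ : p₂ ≠ ⊤)
    (hpr : p₁⁻¹ + r⁻¹ = 1 + p₂⁻¹) : p₁ ≠ ⊤ := by
  rintro rfl
  rw [ENNReal.inv_top, zero_add] at hpr
  exact (ENNReal.inv_le_one.2 hr).not_gt
    (hpr ▸ ENNReal.lt_add_right ENNReal.one_ne_top (ENNReal.inv_ne_zero.2 hp₂))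

-- `x.toReal⁻¹` is `1 / x` also at `x = ∞`, through the junk values `⊤.toReal = 0 = 0⁻¹`.
lemma toReal_inv_add_toReal_inv {p₁ p₂ r : ℝ≥0∞} (hp₁ : 1 ≤ p₁) (hr : 1 ≤ r)
    (hpr : p₁⁻¹ + r⁻¹ = 1 + p₂⁻¹) : p₁.toReal⁻¹ + r.toReal⁻¹ = 1 + p₂.toReal⁻¹ := by
  have hp₁' : p₁⁻¹ ≠ ⊤ := ENNReal.inv_ne_top.2 (zero_lt_one.trans_le hp₁).ne'
  have hr' : r⁻¹ ≠ ⊤ := ENNReal.inv_ne_top.2 (zero_lt_one.trans_le hr).ne'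
  have hp₂' : p₂⁻¹ ≠ ⊤ := (ENNReal.add_ne_top.1 (hpr ▸ ENNReal.add_ne_top.2 ⟨hp₁', hr'⟩)).2
  have h := congrArg ENNReal.toReal hpr
  rwa [ENNReal.toReal_add hp₁' hr', ENNReal.toReal_add ENNReal.one_ne_top hp₂',
    ENNReal.toReal_inv, ENNReal.toReal_inv, ENNReal.toReal_inv, ENNReal.toReal_one] at h

lemma toReal_inv_le_one {r : ℝ≥0∞} (hr : 1 ≤ r) : r.toReal⁻¹ ≤ 1 := by
  rw [← ENNReal.toReal_inv]
  exact ENNReal.toReal_le_of_le_ofReal zero_le_one (by simpa using ENNReal.inv_le_one.2 hr)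

noncomputable def causalConv (K N : ℝ → ℝ≥0∞) (t : ℝ) : ℝ≥0∞ :=
  ∫⁻ σ in Ioc 0 t, K (t - σ) * N σ

lemma measurable_causalConv {K N : ℝ → ℝ≥0∞} (hK : Measurable K) (hN : Measurable N) :
    Measurable (causalConv K N) := by
  have hS : MeasurableSet {x : ℝ × ℝ | x.2 ∈ Ioc 0 x.1} :=
    (measurableSet_lt measurable_const measurable_snd).inter
      (measurableSet_le measurable_snd measurable_fst)
  have hg : Measurable ({x : ℝ × ℝ | x.2 ∈ Ioc 0 x.1}.indicator
      fun x => K (x.1 - x.2) * N x.2) :=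
    ((hK.comp (measurable_fst.sub measurable_snd)).mul (hN.comp measurable_snd)).indicator hS
  convert hg.lintegral_prod_right' (ν := volume) using 1
  funext t
  rw [causalConv, ← lintegral_indicator measurableSet_Ioc]
  rfl

-- Tonelli, after extending `k` by zero off `[0, T)` so that `t ↦ k (t - σ)` is a translate.
lemma lintegral_causalConv_le {k M : ℝ → ℝ≥0∞} (hk : Measurable k) (hM : Measurable M) (T : ℝ) :
    ∫⁻ t in Ioc 0 T, causalConv k M t ≤ (∫⁻ u in Ioc 0 T, k u) * ∫⁻ σ in Ioc 0 T, M σ := by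
  set k' := (Ico 0 T).indicator k
  have hk' : Measurable k' := hk.indicator measurableSet_Ico
  have hk'_sub : ∀ σ, ∫⁻ t in Ioc 0 T, k' (t - σ) ≤ ∫⁻ u in Ioc 0 T, k u := fun σ =>
    calc ∫⁻ t in Ioc 0 T, k' (t - σ) ≤ ∫⁻ t, k' (t - σ) := setLIntegral_le_lintegral _ _
      _ = ∫⁻ u, k' u := lintegral_sub_right_eq_self k' σ
      _ = ∫⁻ u in Ioc 0 T, k u := by
          rw [lintegral_indicator measurableSet_Ico, setLIntegral_congr Ico_ae_eq_Ioc]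
  have hconv : ∀ t ∈ Ioc 0 T, causalConv k M t ≤ ∫⁻ σ in Ioc 0 T, k' (t - σ) * M σ := by
    intro t ht
    calc causalConv k M t = ∫⁻ σ in Ioc 0 t, k' (t - σ) * M σ :=
          setLIntegral_congr_fun measurableSet_Ioc fun σ hσ => by
            have hmem : t - σ ∈ Ico 0 T := ⟨by linarith [hσ.2], by linarith [hσ.1, ht.2]⟩
            rw [show k' (t - σ) = k (t - σ) from indicator_of_mem hmem k]
      _ ≤ _ := lintegral_mono_set (Ioc_subset_Ioc_right ht.2)
  calc ∫⁻ t in Ioc 0 T, causalConv k M t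
      ≤ ∫⁻ t in Ioc 0 T, ∫⁻ σ in Ioc 0 T, k' (t - σ) * M σ :=
        setLIntegral_mono' measurableSet_Ioc hconv
    _ = ∫⁻ σ in Ioc 0 T, ∫⁻ t in Ioc 0 T, k' (t - σ) * M σ :=
        lintegral_lintegral_swap
          ((hk'.comp (measurable_fst.sub measurable_snd)).mul (hM.comp measurable_snd)).aemeasurable
    _ ≤ ∫⁻ σ in Ioc 0 T, (∫⁻ u in Ioc 0 T, k u) * M σ := by
        gcongr with σ
        rw [lintegral_mul_const _ (show Measurable fun t => k' (t - σ) by fun_prop)]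
        exact mul_le_mul_left (hk'_sub σ) _
    _ = _ := lintegral_const_mul _ hM

lemma causalConv_le_timeLp_mul_timeLp {p r : ℝ≥0∞} [p.HolderConjugate r] {K N : ℝ → ℝ≥0∞}
    (hK : Measurable K) (hN : Measurable N) {t T : ℝ} (ht : t ≤ T) :
    causalConv K N t ≤ timeLp r T K * timeLp p T N :=
  calc causalConv K N t ≤ timeLp r t (fun σ => K (t - σ)) * timeLp p t N :=
        lintegral_mul_le_timeLp_mul_timeLp (by fun_prop) hN.aemeasurable
    _ ≤ timeLp r T K * timeLp p T N := by
        rw [timeLp_comp_sub_left]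
        gcongr <;> exact timeLp_mono_horizon _ _ ht

lemma causalConv_rpow_le {K N : ℝ → ℝ≥0∞} (hK : Measurable K) (hN : Measurable N)
    {P Q R : ℝ} (hP : 1 ≤ P) (hQ : 0 < Q) (hR : 1 ≤ R) (hPQR : P⁻¹ + R⁻¹ = 1 + Q⁻¹)
    {t T : ℝ} (ht : t ≤ T) :
    causalConv K N t ^ Q ≤ causalConv (fun u => K u ^ R) (fun σ => N σ ^ P) t *
      ((∫⁻ u in Ioc 0 T, K u ^ R) ^ (R⁻¹ - Q⁻¹) *
        (∫⁻ σ in Ioc 0 T, N σ ^ P) ^ (P⁻¹ - Q⁻¹)) ^ Q := by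
  have hθ₂ : 0 ≤ R⁻¹ - Q⁻¹ := by linarith [inv_le_one_of_one_le₀ hP]
  have hθ₃ : 0 ≤ P⁻¹ - Q⁻¹ := by linarith [inv_le_one_of_one_le₀ hR]
  have hsub : Ioc 0 t ⊆ Ioc 0 T := Ioc_subset_Ioc_right ht
  have h := lintegral_mul_le_young_holder (volume.restrict (Ioc 0 t))
    (f := fun σ => K (t - σ)) (by fun_prop) hN.aemeasurable hP hQ hR hPQR
  rw [setLIntegral_Ioc_comp_sub_left t fun u => K u ^ R] at h
  calc causalConv K N t ^ Q
      ≤ (causalConv (fun u => K u ^ R) (fun σ => N σ ^ P) t ^ Q⁻¹ *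
          ((∫⁻ u in Ioc 0 T, K u ^ R) ^ (R⁻¹ - Q⁻¹) *
            (∫⁻ σ in Ioc 0 T, N σ ^ P) ^ (P⁻¹ - Q⁻¹))) ^ Q := by
        gcongr
        refine h.trans ?_
        rw [← mul_assoc]
        gcongr ?_ * ?_ * ?_
        · exact le_rfl
        · exact ENNReal.rpow_le_rpow (lintegral_mono_set hsub) hθ₂
        · exact ENNReal.rpow_le_rpow (lintegral_mono_set hsub) hθ₃
    _ = _ := by
        rw [ENNReal.mul_rpow_of_nonneg _ _ hQ.le, ← ENNReal.rpow_mul, inv_mul_cancel₀ hQ.ne',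
          ENNReal.rpow_one]

lemma lintegral_causalConv_rpow_le {K N : ℝ → ℝ≥0∞} (hK : Measurable K) (hN : Measurable N)
    {P Q R : ℝ} (hP : 1 ≤ P) (hQ : 0 < Q) (hR : 1 ≤ R) (hPQR : P⁻¹ + R⁻¹ = 1 + Q⁻¹) (T : ℝ) :
    (∫⁻ t in Ioc 0 T, causalConv K N t ^ Q) ^ Q⁻¹ ≤
      (∫⁻ u in Ioc 0 T, K u ^ R) ^ R⁻¹ * (∫⁻ σ in Ioc 0 T, N σ ^ P) ^ P⁻¹ := by
  have hθ₂ : 0 ≤ R⁻¹ - Q⁻¹ := by linarith [inv_le_one_of_one_le₀ hP]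
  have hθ₃ : 0 ≤ P⁻¹ - Q⁻¹ := by linarith [inv_le_one_of_one_le₀ hR]
  set A := ∫⁻ u in Ioc 0 T, K u ^ R
  set B := ∫⁻ σ in Ioc 0 T, N σ ^ P
  have hint : ∫⁻ t in Ioc 0 T, causalConv K N t ^ Q ≤
      A * B * (A ^ (R⁻¹ - Q⁻¹) * B ^ (P⁻¹ - Q⁻¹)) ^ Q :=
    calc ∫⁻ t in Ioc 0 T, causalConv K N t ^ Q
        ≤ ∫⁻ t in Ioc 0 T, causalConv (fun u => K u ^ R) (fun σ => N σ ^ P) t *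
            (A ^ (R⁻¹ - Q⁻¹) * B ^ (P⁻¹ - Q⁻¹)) ^ Q :=
          setLIntegral_mono' measurableSet_Ioc fun t ht =>
            causalConv_rpow_le hK hN hP hQ hR hPQR ht.2
      _ = (∫⁻ t in Ioc 0 T, causalConv (fun u => K u ^ R) (fun σ => N σ ^ P) t) *
            (A ^ (R⁻¹ - Q⁻¹) * B ^ (P⁻¹ - Q⁻¹)) ^ Q :=
          lintegral_mul_const _ (measurable_causalConv (by fun_prop) (by fun_prop))
      _ ≤ _ := by
          gcongr
          exact lintegral_causalConv_le (by fun_prop) (by fun_prop) T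
  calc (∫⁻ t in Ioc 0 T, causalConv K N t ^ Q) ^ Q⁻¹
      ≤ (A * B * (A ^ (R⁻¹ - Q⁻¹) * B ^ (P⁻¹ - Q⁻¹)) ^ Q) ^ Q⁻¹ := by gcongr
    _ = A ^ (Q⁻¹ + (R⁻¹ - Q⁻¹)) * B ^ (Q⁻¹ + (P⁻¹ - Q⁻¹)) := by
        rw [ENNReal.rpow_add_of_nonneg _ _ (by positivity) hθ₂,
          ENNReal.rpow_add_of_nonneg _ _ (by positivity) hθ₃,
          ENNReal.mul_rpow_of_nonneg _ _ (by positivity),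
          ENNReal.mul_rpow_of_nonneg _ _ (by positivity), ← ENNReal.rpow_mul,
          mul_inv_cancel₀ hQ.ne', ENNReal.rpow_one]
        ring
    _ = A ^ R⁻¹ * B ^ P⁻¹ := by simp only [add_sub_cancel]

lemma timeLp_causalConv_le_of_ne_top {p₁ p₂ r : ℝ≥0∞} (hp₁ : 1 ≤ p₁) (hr : 1 ≤ r)
    (hp₂ : p₂ ≠ ⊤) (hpr : p₁⁻¹ + r⁻¹ = 1 + p₂⁻¹) {K N : ℝ → ℝ≥0∞} (hK : Measurable K)
    (hN : Measurable N) (T : ℝ) :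
    timeLp p₂ T (causalConv K N) ≤ timeLp r T K * timeLp p₁ T N := by
  have hp₁' : p₁ ≠ ⊤ := ne_top_of_inv_add_inv_eq hr hp₂ hpr
  have hr' : r ≠ ⊤ := ne_top_of_inv_add_inv_eq hp₁ hp₂ (by rw [add_comm, hpr])
  rw [timeLp_of_ne_top hp₂, timeLp_of_ne_top hr', timeLp_of_ne_top hp₁', one_div, one_div,
    one_div]
  exact lintegral_causalConv_rpow_le hK hN (ENNReal.toReal_one ▸ ENNReal.toReal_mono hp₁' hp₁)
    (ENNReal.toReal_pos (ne_zero_of_inv_add_inv_eq hp₁ hr hpr) hp₂)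
    (ENNReal.toReal_one ▸ ENNReal.toReal_mono hr' hr) (toReal_inv_add_toReal_inv hp₁ hr hpr) T

lemma timeLp_causalConv_le {p₁ p₂ r : ℝ≥0∞} (hp₁ : 1 ≤ p₁) (hr : 1 ≤ r)
    (hpr : p₁⁻¹ + r⁻¹ = 1 + p₂⁻¹) {K N : ℝ → ℝ≥0∞} (hK : Measurable K) (hN : Measurable N)
    (T : ℝ) : timeLp p₂ T (causalConv K N) ≤ timeLp r T K * timeLp p₁ T N := by
  rcases eq_or_ne p₂ ⊤ with rfl | hp₂
  · have : p₁.HolderConjugate r := ENNReal.holderConjugate_iff.2 (by simpa using hpr)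
    exact timeLp_top_le fun t ht => causalConv_le_timeLp_mul_timeLp hK hN ht.2
  · exact timeLp_causalConv_le_of_ne_top hp₁ hr hp₂ hpr hK hN T

lemma setLIntegral_exp_neg_mul_le {β : ℝ} (hβ : 0 < β) (T : ℝ) :
    ∫⁻ u in Ioc 0 T, ENNReal.ofReal (Real.exp (-β * u)) ≤ ENNReal.ofReal β⁻¹ :=
  calc ∫⁻ u in Ioc 0 T, ENNReal.ofReal (Real.exp (-β * u))
      ≤ ∫⁻ u in Ioi 0, ENNReal.ofReal (Real.exp (-β * u)) := lintegral_mono_set Ioc_subset_Ioi_self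
    _ = ENNReal.ofReal β⁻¹ := by
        rw [← ofReal_integral_eq_lintegral_ofReal (integrableOn_exp_mul_Ioi (by linarith) 0)
          (ae_of_all _ fun u => (Real.exp_pos _).le), integral_exp_mul_Ioi (by linarith)]
        simp

lemma timeLp_exp_neg_mul_le {r : ℝ≥0∞} (hr : r ≠ 0) {B : ℝ} (hB : 0 < B) (T : ℝ) :
    timeLp r T (fun u => ENNReal.ofReal (Real.exp (-B * u))) ≤
      ENNReal.ofReal ((r.toReal⁻¹ / B) ^ r.toReal⁻¹) := by
  rcases eq_or_ne r ⊤ with rfl | hr'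
  · simp only [ENNReal.toReal_top, inv_zero, zero_div, Real.rpow_zero, ENNReal.ofReal_one]
    refine timeLp_top_le fun u hu => ENNReal.ofReal_le_one.2 (Real.exp_le_one_iff.2 ?_)
    nlinarith [hu.1]
  have hR : 0 < r.toReal := ENNReal.toReal_pos hr hr'
  have hpow : ∀ u, ENNReal.ofReal (Real.exp (-B * u)) ^ r.toReal =
      ENNReal.ofReal (Real.exp (-(B * r.toReal) * u)) := fun u => by
    rw [ENNReal.ofReal_rpow_of_nonneg (Real.exp_pos _).le hR.le, ← Real.exp_mul]
    ring_nf
  rw [timeLp_of_ne_top hr', one_div]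
  simp only [hpow]
  calc (∫⁻ u in Ioc 0 T, ENNReal.ofReal (Real.exp (-(B * r.toReal) * u))) ^ r.toReal⁻¹
      ≤ ENNReal.ofReal (B * r.toReal)⁻¹ ^ r.toReal⁻¹ := by
        gcongr
        exact setLIntegral_exp_neg_mul_le (by positivity) T
    _ = _ := by
        rw [ENNReal.ofReal_rpow_of_nonneg (by positivity) (by positivity), mul_inv, div_eq_mul_inv,
          mul_comm]

lemma timeLp_const_one {r : ℝ≥0∞} (hr : r ≠ 0) {T : ℝ} (hT : 0 < T) :
    timeLp r T (fun _ => 1) = ENNReal.ofReal (T ^ r.toReal⁻¹) := by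
  rcases eq_or_ne r ⊤ with rfl | hr'
  · rw [timeLp_top, essSup_const _ (by simp [Measure.restrict_eq_zero, hT])]
    simp
  · rw [← ENNReal.ofReal_rpow_of_pos hT, timeLp_of_ne_top hr']
    simp

lemma timeLp_le_of_le_const_mul_causalConv {p₁ p₂ r : ℝ≥0∞} (hp₁ : 1 ≤ p₁) (hr : 1 ≤ r)
    (hpr : p₁⁻¹ + r⁻¹ = 1 + p₂⁻¹) {K N F : ℝ → ℝ≥0∞} (hK : Measurable K) (hN : Measurable N)
    {T a κ : ℝ} (ha : 0 ≤ a) (hκ : timeLp r T K ≤ ENNReal.ofReal κ)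
    (hF : ∀ t ∈ Ioc 0 T, F t ≤ ENNReal.ofReal a * causalConv K N t) :
    timeLp p₂ T F ≤ ENNReal.ofReal (a * κ) * timeLp p₁ T N :=
  calc timeLp p₂ T F ≤ timeLp p₂ T (fun t => ENNReal.ofReal a * causalConv K N t) := timeLp_mono hF
    _ = ENNReal.ofReal a * timeLp p₂ T (causalConv K N) :=
        timeLp_const_mul (ne_zero_of_inv_add_inv_eq hp₁ hr hpr) ENNReal.ofReal_ne_top T _
    _ ≤ ENNReal.ofReal a * (ENNReal.ofReal κ * timeLp p₁ T N) := by
        gcongr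
        exact (timeLp_causalConv_le hp₁ hr hpr hK hN T).trans (by gcongr)
    _ = ENNReal.ofReal (a * κ) * timeLp p₁ T N := by rw [ENNReal.ofReal_mul ha, mul_assoc]

lemma rpow_le_one_add {y ρ : ℝ} (hy : 0 ≤ y) (hρ₀ : 0 ≤ ρ) (hρ₁ : ρ ≤ 1) : y ^ ρ ≤ 1 + y := by
  have h := Real.geom_mean_le_arith_mean2_weighted hρ₀ (sub_nonneg.2 hρ₁) hy zero_le_one
    (add_sub_cancel ρ 1)
  rw [Real.one_rpow, mul_one] at h
  nlinarith

lemma two_rpow_mul_decay_le (x s : ℝ) {ρ c : ℝ} (hρ₀ : 0 ≤ ρ) (hρ₁ : ρ ≤ 1) (hc : 0 < c) :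
    2 ^ (x * (s - 1 + 2 * ρ)) * (2 ^ x * (ρ / (c * 4 ^ x)) ^ ρ) ≤ (1 + c⁻¹) * 2 ^ (x * s) := by
  have h4 : (4 : ℝ) ^ x = 2 ^ (2 * x) := by
    rw [Real.rpow_mul zero_le_two]; norm_num
  have hsplit : (ρ / (c * 4 ^ x)) ^ ρ = (ρ / c) ^ ρ * 2 ^ (-(2 * x * ρ)) := by
    rw [h4, div_mul_eq_div_div, Real.div_rpow (by positivity) (by positivity),
      ← Real.rpow_mul zero_le_two, Real.rpow_neg zero_le_two, div_eq_mul_inv]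
  have htwo : (2 : ℝ) ^ (x * (s - 1 + 2 * ρ)) * 2 ^ x * 2 ^ (-(2 * x * ρ)) = 2 ^ (x * s) := by
    rw [← Real.rpow_add two_pos, ← Real.rpow_add two_pos]
    ring_nf
  have hρc : (ρ / c) ^ ρ ≤ 1 + c⁻¹ :=
    (rpow_le_one_add (by positivity) hρ₀ hρ₁).trans
      (by rw [div_eq_mul_inv]; nlinarith [inv_pos.2 hc])
  calc 2 ^ (x * (s - 1 + 2 * ρ)) * (2 ^ x * (ρ / (c * 4 ^ x)) ^ ρ)
      = (ρ / c) ^ ρ * 2 ^ (x * s) := by rw [hsplit, ← htwo]; ring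
    _ ≤ (1 + c⁻¹) * 2 ^ (x * s) := by gcongr

lemma two_rpow_neg_mul_rpow_le (s : ℝ) {ρ T : ℝ} (hρ₀ : 0 ≤ ρ) (hρ₁ : ρ ≤ 1) (hT : 0 ≤ T) :
    2 ^ (-1 * (s - 1 + 2 * ρ)) * T ^ ρ ≤ 2 * (1 + T) * 2 ^ (-1 * s) := by
  have htwo : (2 : ℝ) ^ (-1 * (s - 1 + 2 * ρ)) ≤ 2 * 2 ^ (-1 * s) := by
    calc (2 : ℝ) ^ (-1 * (s - 1 + 2 * ρ)) ≤ 2 ^ (1 + -1 * s) :=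
          Real.rpow_le_rpow_of_exponent_le one_le_two (by linarith)
      _ = 2 * 2 ^ (-1 * s) := by rw [Real.rpow_add two_pos, Real.rpow_one]
  calc 2 ^ (-1 * (s - 1 + 2 * ρ)) * T ^ ρ ≤ 2 * 2 ^ (-1 * s) * (1 + T) := by
        gcongr
        exact rpow_le_one_add hT hρ₀ hρ₁
    _ = 2 * (1 + T) * 2 ^ (-1 * s) := by ring

lemma ofReal_mul_le_ofReal_mul_ofReal_mul {w' A M w : ℝ} {x y : ℝ≥0∞} (hw' : 0 ≤ w')
    (hw : 0 ≤ w) (hx : x ≤ ENNReal.ofReal A * y) (h : w' * A ≤ M * w) :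
    ENNReal.ofReal w' * x ≤ ENNReal.ofReal M * (ENNReal.ofReal w * y) :=
  calc ENNReal.ofReal w' * x ≤ ENNReal.ofReal w' * (ENNReal.ofReal A * y) := by gcongr
    _ = ENNReal.ofReal (w' * A) * y := by rw [← mul_assoc, ENNReal.ofReal_mul hw']
    _ ≤ ENNReal.ofReal (M * w) * y := by gcongr
    _ = ENNReal.ofReal M * (ENNReal.ofReal w * y) := by rw [ENNReal.ofReal_mul' hw, mul_assoc]

lemma weighted_timeLp_le_of_low_block {p₁ p₂ r : ℝ≥0∞} (hp₁ : 1 ≤ p₁) (hr : 1 ≤ r)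
    (hpr : p₁⁻¹ + r⁻¹ = 1 + p₂⁻¹) {F N : ℝ → ℝ≥0∞} (hN : Measurable N) {s C c T : ℝ}
    (hC : 0 < C) (hc : 0 < c) (hT : 0 < T)
    (hF : ∀ t ∈ Ioc 0 T, F t ≤ ENNReal.ofReal C * ∫⁻ σ in Ioc 0 t, N σ) :
    ENNReal.ofReal (2 ^ (-1 * (s - 1 + 2 * r.toReal⁻¹))) * timeLp p₂ T F ≤
      ENNReal.ofReal (2 * C * (1 + c⁻¹) * (1 + T)) *
        (ENNReal.ofReal (2 ^ (-1 * s)) * timeLp p₁ T N) := by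
  refine ofReal_mul_le_ofReal_mul_ofReal_mul (by positivity) (by positivity)
    (timeLp_le_of_le_const_mul_causalConv hp₁ hr hpr measurable_const hN hC.le
      (timeLp_const_one (zero_lt_one.trans_le hr).ne' hT).le
      fun t ht => by simpa [causalConv] using hF t ht) ?_
  have h := two_rpow_neg_mul_rpow_le s (by positivity) (toReal_inv_le_one hr) hT.le
  nlinarith [mul_le_mul_of_nonneg_left h hC.le, mul_nonneg (mul_nonneg hC.le
    (by positivity : (0 : ℝ) ≤ 2 * (1 + T) * 2 ^ (-1 * s))) (inv_pos.2 hc).le]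

lemma weighted_timeLp_le_of_high_block {p₁ p₂ r : ℝ≥0∞} (hp₁ : 1 ≤ p₁) (hr : 1 ≤ r)
    (hpr : p₁⁻¹ + r⁻¹ = 1 + p₂⁻¹) {F N : ℝ → ℝ≥0∞} (hN : Measurable N) {x s C c T : ℝ}
    (hC : 0 < C) (hc : 0 < c) (hT : 0 < T)
    (hF : ∀ t ∈ Ioc 0 T, F t ≤ ENNReal.ofReal C * ∫⁻ σ in Ioc 0 t,
      ENNReal.ofReal (2 ^ x * Real.exp (-c * (t - σ) * 4 ^ x)) * N σ) :
    ENNReal.ofReal (2 ^ (x * (s - 1 + 2 * r.toReal⁻¹))) * timeLp p₂ T F ≤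
      ENNReal.ofReal (2 * C * (1 + c⁻¹) * (1 + T)) *
        (ENNReal.ofReal (2 ^ (x * s)) * timeLp p₁ T N) := by
  have hF' : ∀ t ∈ Ioc 0 T, F t ≤ ENNReal.ofReal (C * 2 ^ x) *
      causalConv (fun u => ENNReal.ofReal (Real.exp (-(c * 4 ^ x) * u))) N t := fun t ht => by
    refine (hF t ht).trans_eq ?_
    rw [causalConv, ENNReal.ofReal_mul hC.le, mul_assoc,
      ← lintegral_const_mul' (ENNReal.ofReal (2 ^ x)) _ ENNReal.ofReal_ne_top]
    congr 1
    refine lintegral_congr fun σ => ?_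
    rw [← mul_assoc, ← ENNReal.ofReal_mul (by positivity)]
    congr 4
    ring
  refine ofReal_mul_le_ofReal_mul_ofReal_mul (by positivity) (by positivity)
    (timeLp_le_of_le_const_mul_causalConv hp₁ hr hpr (by fun_prop) hN (by positivity)
      (timeLp_exp_neg_mul_le (zero_lt_one.trans_le hr).ne' (by positivity) T) hF') ?_
  have h := two_rpow_mul_decay_le x s (by positivity) (toReal_inv_le_one hr) hc
  nlinarith [mul_le_mul_of_nonneg_left h hC.le, mul_nonneg (mul_nonneg hC.le
    (by positivity : (0 : ℝ) ≤ (1 + c⁻¹) * 2 ^ (x * s))) (by linarith : 0 ≤ 1 + 2 * T)]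

/-- The Littlewood–Paley blocks (indexed by `j : ℕ`, `j` standing for the dyadic index `j - 1`)
of `f` and of `L_Oss f` enter only through their `L^q` norms; the hypotheses encode the Duhamel
dyadic block estimate `‖Δ_j (L_Oss f)(t)‖_{L^q} ≤ C ∫₀ᵗ 2^j e^{-c(t-s)4^j} ‖Δ_j f(s)‖_{L^q} ds`
for `j ≥ 0` and the low-frequency estimate
`‖Δ_{-1} (L_Oss f)(t)‖_{L^q} ≤ C ∫₀ᵗ ‖Δ_{-1} f(s)‖_{L^q} ds`. -/
theorem stmt_19_general (d : ℕ) (p₁ p₂ q : ℝ≥0∞)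
    (hp₁ : 1 ≤ p₁) (hp₁₂ : p₁ ≤ p₂) (s : ℝ) (C c : ℝ) (hC : 0 < C) (hc : 0 < c) :
    ∃ C' : ℝ, 0 < C' ∧ ∀ T : ℝ, 0 < T →
      ∀ Δf ΔLf : ℕ → ℝ → EuclideanSpace ℝ (Fin d) → ℂ,
      (∀ j : ℕ, Measurable fun t => eLpNorm (Δf j t) q volume) →
      (∀ j : ℕ, Measurable fun t => eLpNorm (ΔLf j t) q volume) →
      (∀ j : ℕ, 1 ≤ j → ∀ t ∈ Set.Ioc (0 : ℝ) T,
        eLpNorm (ΔLf j t) q volume ≤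
          ENNReal.ofReal C * ∫⁻ σ in Set.Ioc 0 t,
            ENNReal.ofReal
              ((2 : ℝ) ^ ((j : ℝ) - 1) * Real.exp (-c * (t - σ) * 4 ^ ((j : ℝ) - 1))) *
              eLpNorm (Δf j σ) q volume) →
      (∀ t ∈ Set.Ioc (0 : ℝ) T,
        eLpNorm (ΔLf 0 t) q volume ≤
          ENNReal.ofReal C * ∫⁻ σ in Set.Ioc 0 t, eLpNorm (Δf 0 σ) q volume) →
      (⨆ j : ℕ,
          ENNReal.ofReal
              ((2 : ℝ) ^ (((j : ℝ) - 1) * (s + 1 - 2 * (1 / p₁.toReal - 1 / p₂.toReal)))) *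
            timeLp p₂ T (fun t => eLpNorm (ΔLf j t) q volume)) ≤
        ENNReal.ofReal (C' * (1 + T)) *
          ⨆ j : ℕ, ENNReal.ofReal ((2 : ℝ) ^ (((j : ℝ) - 1) * s)) *
            timeLp p₁ T (fun t => eLpNorm (Δf j t) q volume) := by
  obtain ⟨r, hr, hpr⟩ := exists_one_le_inv_add_inv_eq hp₁ hp₁₂
  have hs' : ∀ x : ℝ, x * (s + 1 - 2 * (1 / p₁.toReal - 1 / p₂.toReal)) =
      x * (s - 1 + 2 * r.toReal⁻¹) := fun x => by
    have := toReal_inv_add_toReal_inv hp₁ hr hpr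
    rw [one_div, one_div]
    congr 1
    linarith
  refine ⟨2 * C * (1 + c⁻¹), by positivity,
    fun T hT Δf ΔLf hΔf _ hhigh hlow => iSup_le fun j => ?_⟩
  rw [hs']
  refine le_trans ?_ (mul_le_mul_right (le_iSup _ j) _)
  rcases j with _ | j
  · rw [Nat.cast_zero, zero_sub]
    exact weighted_timeLp_le_of_low_block hp₁ hr hpr (hΔf 0) hC hc hT hlow
  · exact weighted_timeLp_le_of_high_block hp₁ hr hpr (hΔf _) hC hc hT
      (hhigh _ (Nat.le_add_left 1 j))

/-- Smoothing effect of the Oseen operator `L_Oss f t = -∫₀ᵗ e^{(t-s)Δ} ℙ∇ f(s) ds` in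
Chemin–Lerner spaces. The Littlewood–Paley blocks (indexed by `j : ℕ`, `j` standing for the
dyadic index `j - 1`) of `f` and of `g = L_Oss f` are given through their `L^q` norms; the
hypotheses encode the Duhamel dyadic block estimate
`‖Δ_j (L_Oss f)(t)‖_{L^q} ≤ C ∫₀ᵗ 2^j e^{-c(t-s)4^j} ‖Δ_j f(s)‖_{L^q} ds` for `j ≥ 0` and the
low-frequency estimate `‖Δ_{-1} (L_Oss f)(t)‖_{L^q} ≤ C ∫₀ᵗ ‖Δ_{-1} f(s)‖_{L^q} ds`. The
conclusion is the bound `‖L_Oss f‖_{𝐋̃^{p₂}_T B^{s',∞}_q} ≤ C'(1+T) ‖f‖_{𝐋̃^{p₁}_T B^{s,∞}_q}`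
with `s' = s + 1 - 2(1/p₁ - 1/p₂)` and `C'` independent of `T`. -/
theorem stmt_19 (d : ℕ) (hd : 0 < d) (p₁ p₂ q : ℝ≥0∞)
    (hp₁ : 1 ≤ p₁) (hp₁₂ : p₁ ≤ p₂) (hq : 1 ≤ q) (s : ℝ) (C c : ℝ) (hC : 0 < C) (hc : 0 < c) :
    ∃ C' : ℝ, 0 < C' ∧ ∀ T : ℝ, 0 < T →
      ∀ Δf ΔLf : ℕ → ℝ → EuclideanSpace ℝ (Fin d) → ℂ,
      (∀ j : ℕ, Measurable fun t => eLpNorm (Δf j t) q volume) →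
      (∀ j : ℕ, Measurable fun t => eLpNorm (ΔLf j t) q volume) →
      (∀ j : ℕ, 1 ≤ j → ∀ t ∈ Set.Ioc (0 : ℝ) T,
        eLpNorm (ΔLf j t) q volume ≤
          ENNReal.ofReal C * ∫⁻ σ in Set.Ioc 0 t,
            ENNReal.ofReal
              ((2 : ℝ) ^ ((j : ℝ) - 1) * Real.exp (-c * (t - σ) * 4 ^ ((j : ℝ) - 1))) *
              eLpNorm (Δf j σ) q volume) →
      (∀ t ∈ Set.Ioc (0 : ℝ) T,
        eLpNorm (ΔLf 0 t) q volume ≤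
          ENNReal.ofReal C * ∫⁻ σ in Set.Ioc 0 t, eLpNorm (Δf 0 σ) q volume) →
      (⨆ j : ℕ,
          ENNReal.ofReal
              ((2 : ℝ) ^ (((j : ℝ) - 1) * (s + 1 - 2 * (1 / p₁.toReal - 1 / p₂.toReal)))) *
            timeLp p₂ T (fun t => eLpNorm (ΔLf j t) q volume)) ≤
        ENNReal.ofReal (C' * (1 + T)) *
          ⨆ j : ℕ, ENNReal.ofReal ((2 : ℝ) ^ (((j : ℝ) - 1) * s)) *
            timeLp p₁ T (fun t => eLpNorm (Δf j t) q volume) :=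
  stmt_19_general d p₁ p₂ q hp₁ hp₁₂ s C c hC hc
end
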